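/- For every integer N ≥ 2 and every i with 2 ≤ i ≤ N, a(i,N) = Σ 2^{k_1+⋯+k_{i-1}} · ∏_{j=2}^{i} (N - (k_j + k_{j+1} + ⋯ + k_{i-1}) - (2i+2-j)/2)_{k_{j-1}} · (2(N - i - (k_1+⋯+k_{i-1})) - 1)!!, where the sum runs over all tuples (k_1, …, k_{i-1}) of nonnegative integers with k_1 + ⋯ + k_{i-1} ≤ N - i. -/

import Mathlib

/-!
Unrolling the recursion in `N` expresses `a(i,N)` through the previous column:
`a(i,N) = Σ_{m ≤ N-i} 2^m (N - 1 - i/2)_m a(i-1, N-1-m)`, because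
`(2N - i)(N - 1 - i/2)_m = 2 (N - i/2)_{m+1}`. Iterating this down to the first column,
where `a(1,N) = (2N-3)!!`, the summation variable `m` of the step from column `j + 1` to
column `j` becomes `k_j`, and the shifts `N ↦ N - 1 - m` accumulate into the arguments of the falling factorials.
-/

/-- The falling factorial `(y)_k = y(y-1)⋯(y-k+1)` of a real number, `(y)_0 = 1`. -/
noncomputable def fallingFactorial (y : ℝ) (k : ℕ) : ℝ :=
  ∏ j ∈ Finset.range k, (y - (j : ℝ))

open Finset

lemma fallingFactorial_zero (y : ℝ) : fallingFactorial y 0 = 1 := by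
  simp [fallingFactorial]

lemma fallingFactorial_succ (y : ℝ) (k : ℕ) :
    fallingFactorial y (k + 1) = y * fallingFactorial (y - 1) k := by
  unfold fallingFactorial
  rw [prod_range_succ', Nat.cast_zero, sub_zero, mul_comm]
  congr 1
  refine prod_congr rfl fun j _ => ?_
  push_cast
  ring

def tuplesSumLe (n M : ℕ) : Finset (Fin n → ℕ) :=
  (Fintype.piFinset fun _ : Fin n => range (M + 1)).filter (fun k => ∑ j, k j ≤ M)

lemma mem_tuplesSumLe {n M : ℕ} (k : Fin n → ℕ) : k ∈ tuplesSumLe n M ↔ ∑ j, k j ≤ M := by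
  simp only [tuplesSumLe, mem_filter, Fintype.mem_piFinset, mem_range, and_iff_right_iff_imp]
  exact fun h j =>
    Nat.lt_succ_of_le <| (single_le_sum (fun _ _ => Nat.zero_le _) (mem_univ j)).trans h

lemma tuplesSumLe_zero (M : ℕ) : tuplesSumLe 0 M = {Fin.elim0} := by
  ext k
  simp [mem_tuplesSumLe, funext_iff]

lemma sum_tuplesSumLe_succ {β : Type*} [AddCommMonoid β] {n M : ℕ} (f : (Fin (n + 1) → ℕ) → β) :
    ∑ k ∈ tuplesSumLe (n + 1) M, f k
      = ∑ m ∈ range (M + 1), ∑ k ∈ tuplesSumLe n (M - m), f (Fin.snoc k m) := by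
  have sum_snoc (k : Fin n → ℕ) (m : ℕ) :
      ∑ j, (Fin.snoc k m : Fin (n + 1) → ℕ) j = ∑ j, k j + m := by
    simp [Fin.sum_univ_castSucc]
  rw [sum_sigma']
  refine sum_bij' (fun k _ => ⟨k (Fin.last n), Fin.init k⟩) (fun p _ => Fin.snoc p.2 p.1)
    (fun k hk => ?_) (fun p hp => ?_) (fun k _ => Fin.snoc_init_self k)
    (fun p _ => by simp) (fun k _ => by rw [Fin.snoc_init_self])
  · rw [mem_tuplesSumLe, ← Fin.snoc_init_self k, sum_snoc] at hk
    simp only [mem_sigma, mem_range, mem_tuplesSumLe] at hk ⊢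
    omega
  · simp only [mem_sigma, mem_range, mem_tuplesSumLe] at hp ⊢
    rw [sum_snoc]
    omega

-- The paper's `k_1, …, k_n` are `oneBased k 1, …, oneBased k n`.
def oneBased {n : ℕ} (k : Fin n → ℕ) (m : ℕ) : ℕ :=
  if h : m - 1 < n then k ⟨m - 1, h⟩ else 0

lemma oneBased_snoc_of_le {n : ℕ} (k : Fin n → ℕ) (m : ℕ) {j : ℕ} (hj1 : 1 ≤ j) (hjn : j ≤ n) :
    oneBased (Fin.snoc k m : Fin (n + 1) → ℕ) j = oneBased k j := by
  have h : j - 1 < n := by omega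
  simp only [oneBased, dif_pos h, dif_pos (Nat.lt_succ_of_lt h)]
  exact Fin.snoc_castSucc (α := fun _ => ℕ) (p := k) (x := m) (i := ⟨j - 1, h⟩)

lemma oneBased_snoc_self {n : ℕ} (k : Fin n → ℕ) (m : ℕ) :
    oneBased (Fin.snoc k m : Fin (n + 1) → ℕ) (n + 1) = m := by
  simp only [oneBased, Nat.add_sub_cancel, dif_pos (Nat.lt_succ_self n)]
  exact Fin.snoc_last (α := fun _ => ℕ) (p := k) (x := m)

noncomputable def summand (i N : ℕ) (K : ℕ → ℕ) : ℝ :=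
  2 ^ (∑ j ∈ Icc 1 (i - 1), K j) *
    (∏ j ∈ Icc 2 i,
      fallingFactorial
        ((N : ℝ) - (∑ l ∈ Icc j (i - 1), (K l : ℝ)) - (2 * (i : ℝ) + 2 - (j : ℝ)) / 2)
        (K (j - 1))) *
    (Nat.doubleFactorial (2 * (N - i - ∑ j ∈ Icc 1 (i - 1), K j) - 1) : ℝ)

lemma summand_congr {i N : ℕ} {K K' : ℕ → ℕ} (h : ∀ j ∈ Icc 1 (i - 1), K j = K' j) :
    summand i N K = summand i N K' := by
  have hsum (j : ℕ) (hj : 1 ≤ j) : ∑ l ∈ Icc j (i - 1), K l = ∑ l ∈ Icc j (i - 1), K' l :=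
    sum_congr rfl fun l hl => h l (by simp only [mem_Icc] at hl ⊢; omega)
  have hprod : ∀ j ∈ Icc 2 i, K (j - 1) = K' (j - 1) := fun j hj =>
    h _ (by simp only [mem_Icc] at hj ⊢; omega)
  unfold summand
  simp_rw [← Nat.cast_sum]
  rw [hsum 1 le_rfl]
  congr 2
  refine prod_congr rfl fun j hj => ?_
  rw [hsum j (by simp only [mem_Icc] at hj; omega), hprod j hj]

lemma summand_succ {n N m : ℕ} {K : ℕ → ℕ} (hK : K (n + 1) = m) (hmN : m + (n + 2) ≤ N) :
    summand (n + 2) N K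
      = 2 ^ m * fallingFactorial ((N : ℝ) - 1 - ((n + 2 : ℕ) : ℝ) / 2) m *
          summand (n + 1) (N - 1 - m) K := by
  have hsum (j : ℕ) (hj : j ≤ n + 1) : ∑ l ∈ Icc j (n + 1), K l = ∑ l ∈ Icc j n, K l + m := by
    rw [sum_Icc_succ_top hj, hK]
  have hcast : ((N - 1 - m : ℕ) : ℝ) = N - 1 - m := by
    rw [Nat.cast_sub (by omega), Nat.cast_sub (by omega)]
    simp
  have hprod : ∏ j ∈ Icc 2 (n + 2),
        fallingFactorial
          ((N : ℝ) - (∑ l ∈ Icc j (n + 1), (K l : ℝ)) - (2 * ((n + 2 : ℕ) : ℝ) + 2 - j) / 2)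
          (K (j - 1))
      = (∏ j ∈ Icc 2 (n + 1),
          fallingFactorial
            (((N - 1 - m : ℕ) : ℝ) - (∑ l ∈ Icc j n, (K l : ℝ)) -
              (2 * ((n + 1 : ℕ) : ℝ) + 2 - j) / 2)
            (K (j - 1))) *
        fallingFactorial ((N : ℝ) - 1 - ((n + 2 : ℕ) : ℝ) / 2) m := by
    rw [prod_Icc_succ_top (a := 2) (b := n + 1) (by omega),
      Icc_eq_empty (a := n + 1 + 1) (b := n + 1) (by omega), sum_empty, Nat.add_sub_cancel, hK]
    congr 1
    · refine prod_congr rfl fun j hj => ?_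
      simp only [← Nat.cast_sum, hsum j (mem_Icc.1 hj).2, hcast]
      push_cast
      ring_nf
    · push_cast
      ring_nf
  unfold summand
  rw [show n + 2 - 1 = n + 1 from rfl, Nat.add_sub_cancel, hprod, hsum 1 (by omega)]
  rw [show N - (n + 2) - (∑ j ∈ Icc 1 n, K j + m) = N - 1 - m - (n + 1) - ∑ j ∈ Icc 1 n, K j
    by omega]
  ring

lemma a_one_eq_doubleFactorial (a : ℕ → ℕ → ℝ) (ha11 : a 1 1 = 1)
    (ha1 : ∀ N : ℕ, 1 ≤ N → a 1 (N + 1) = (2 * (N : ℝ) - 1) * a 1 N) {N : ℕ} (hN : 1 ≤ N) :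
    a 1 N = ((2 * (N - 1) - 1).doubleFactorial : ℝ) := by
  induction N, hN using Nat.le_induction with
  | base => simp [ha11]
  | succ N hN ih =>
    obtain ⟨M, rfl⟩ : ∃ M, N = M + 1 := ⟨N - 1, by omega⟩
    rw [ha1 _ hN, ih]
    rcases M with _ | M
    · norm_num
    · rw [show 2 * (M + 1 + 1 + 1 - 1) - 1 = 2 * M + 1 + 2 by omega, Nat.doubleFactorial_add_two,
        show 2 * (M + 1 + 1 - 1) - 1 = 2 * M + 1 by omega]
      push_cast
      ring

lemma a_eq_sum_range (a : ℕ → ℕ → ℝ) (hadiag : ∀ N : ℕ, 1 ≤ N → a (N + 1) (N + 1) = a N N)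
    (harec : ∀ N i : ℕ, 2 ≤ i → i ≤ N →
      a i (N + 1) = a (i - 1) N + (2 * (N : ℝ) - (i : ℝ)) * a i N)
    {i N : ℕ} (hi : 2 ≤ i) (hiN : i ≤ N) :
    a i N = ∑ m ∈ range (N - i + 1),
      2 ^ m * fallingFactorial ((N : ℝ) - 1 - (i : ℝ) / 2) m * a (i - 1) (N - 1 - m) := by
  induction N, hiN using Nat.le_induction with
  | base =>
    obtain ⟨n, rfl⟩ : ∃ n, i = n + 1 := ⟨i - 1, by omega⟩
    simp [hadiag n (by omega), fallingFactorial_zero]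
  | succ N hiN ih =>
    rw [harec N i hi hiN, show N + 1 - i + 1 = N - i + 1 + 1 by omega, sum_range_succ',
      ih, mul_sum, add_comm]
    congr 1
    · refine sum_congr rfl fun m _ => ?_
      rw [fallingFactorial_succ, show N + 1 - 1 - (m + 1) = N - 1 - m by omega]
      push_cast
      ring_nf
    · simp [fallingFactorial_zero]

theorem a_eq_sum_summand (a : ℕ → ℕ → ℝ) (ha11 : a 1 1 = 1)
    (ha1 : ∀ N : ℕ, 1 ≤ N → a 1 (N + 1) = (2 * (N : ℝ) - 1) * a 1 N)
    (hadiag : ∀ N : ℕ, 1 ≤ N → a (N + 1) (N + 1) = a N N)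
    (harec : ∀ N i : ℕ, 2 ≤ i → i ≤ N →
      a i (N + 1) = a (i - 1) N + (2 * (N : ℝ) - (i : ℝ)) * a i N)
    (n : ℕ) {N : ℕ} (hN : n + 1 ≤ N) :
    a (n + 1) N = ∑ k ∈ tuplesSumLe n (N - (n + 1)), summand (n + 1) N (oneBased k) := by
  induction n generalizing N with
  | zero =>
    simp [tuplesSumLe_zero, summand, a_one_eq_doubleFactorial a ha11 ha1 hN]
  | succ n ih =>
    rw [a_eq_sum_range a hadiag harec (by omega) hN, sum_tuplesSumLe_succ, Nat.add_sub_cancel]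
    refine sum_congr rfl fun m hm => ?_
    have hmN : m + (n + 2) ≤ N := by simp only [mem_range] at hm; omega
    rw [ih (by omega), show N - 1 - m - (n + 1) = N - (n + 1 + 1) - m by omega, mul_sum]
    refine sum_congr rfl fun k _ => ?_
    rw [summand_succ (oneBased_snoc_self k m) hmN,
      summand_congr fun j hj => oneBased_snoc_of_le k m (mem_Icc.1 hj).1 (mem_Icc.1 hj).2]

-- `Nat` subtraction gives `2 * 0 - 1 = 0`, so the last factor realizes `(-1)!! = 1`.
theorem stmt4
    (a : ℕ → ℕ → ℝ)
    (ha11 : a 1 1 = 1)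
    (ha1 : ∀ N : ℕ, 1 ≤ N → a 1 (N + 1) = (2 * (N : ℝ) - 1) * a 1 N)
    (hadiag : ∀ N : ℕ, 1 ≤ N → a (N + 1) (N + 1) = a N N)
    (harec : ∀ N i : ℕ, 2 ≤ i → i ≤ N →
      a i (N + 1) = a (i - 1) N + (2 * (N : ℝ) - (i : ℝ)) * a i N)
    (N i : ℕ) (hi2 : 2 ≤ i) (hiN : i ≤ N) :
    a i N =
      ∑ k ∈ (Fintype.piFinset fun _ : Fin (i - 1) => Finset.range (N - i + 1)).filter
          (fun k => ∑ j, k j ≤ N - i),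
        (fun K : ℕ → ℕ =>
          2 ^ (∑ j ∈ Finset.Icc 1 (i - 1), K j) *
            (∏ j ∈ Finset.Icc 2 i,
              fallingFactorial
                ((N : ℝ) - (∑ l ∈ Finset.Icc j (i - 1), (K l : ℝ)) -
                  (2 * (i : ℝ) + 2 - (j : ℝ)) / 2)
                (K (j - 1))) *
            (Nat.doubleFactorial (2 * (N - i - ∑ j ∈ Finset.Icc 1 (i - 1), K j) - 1) : ℝ))
        (fun m : ℕ => if h : m - 1 < i - 1 then k ⟨m - 1, h⟩ else 0) := by
  obtain ⟨n, rfl⟩ : ∃ n, i = n + 1 := ⟨i - 1, by omega⟩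
  exact a_eq_sum_summand a ha11 ha1 hadiag harec n hiN
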